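/- Decision-Evaluation Paradox: there exists a forcing axiom A whose implied rule f never makes decisions obeying A, i.e., A(x,f,f(x))=0 for every profile x. Concretely, with X = Y = {0,1}, the axiom obeyed exactly by the decisions (0, const 0, 0) and (1, const 1, 1) is forcing with implied rule the identity, yet the identity's decisions always violate the axiom. -/

import Mathlib

/-- The axiom obeyed exactly by decisions (false, const false, false) and
    (true, const true, true). -/
def Aparadox : Bool → (Bool → Bool) → Bool → Prop := fun x f y =>
  (x = false ∧ f = (fun _ => false) ∧ y = false) ∨
  (x = true ∧ f = (fun _ => true) ∧ y = true)

/-! The axiom only admits constant rules, so its blackbox reduction is the graph of the identity;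
but the identity is not constant, so none of its own decisions obeys the axiom. -/

theorem Function.const_ne_id {α : Type*} [Nontrivial α] (b : α) : Function.const α b ≠ id := by
  obtain ⟨a, hab⟩ := exists_ne b
  exact fun h => hab (congrFun h a).symm

theorem aparadox_iff {x : Bool} {f : Bool → Bool} {y : Bool} :
    Aparadox x f y ↔ f = Function.const Bool x ∧ y = x := by
  cases x <;> simp [Aparadox, Function.const_def]

theorem aparadox_const (x : Bool) : Aparadox x (Function.const Bool x) x :=
  aparadox_iff.2 ⟨rfl, rfl⟩

/-- Decision-Evaluation Paradox: Aparadox is forcing, its implied rule is the identity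
    (its blackbox reduction is the graph of id), yet every decision made by the
    identity rule violates Aparadox. -/
theorem stmt_15 :
    (∀ x : Bool, ∃ f : Bool → Bool, Aparadox x f (f x)) ∧
    (∀ x : Bool, ∃ y₀ : Bool, ∀ (f : Bool → Bool) (y : Bool), Aparadox x f y → y = y₀) ∧
    ({p : Bool × Bool | ∃ g : Bool → Bool, g p.1 = p.2 ∧ Aparadox p.1 g p.2} =
      {p : Bool × Bool | p.2 = id p.1}) ∧
    (∀ x : Bool, ¬ Aparadox x id (id x)) := by
  refine ⟨fun x => ⟨_, aparadox_const x⟩, fun x => ⟨x, fun _ _ h => (aparadox_iff.1 h).2⟩, ?_,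
    fun x h => Function.const_ne_id x (aparadox_iff.1 h).1.symm⟩
  ext ⟨x, y⟩
  constructor
  · rintro ⟨g, -, hA⟩
    exact (aparadox_iff.1 hA).2
  · rintro (rfl : y = x)
    exact ⟨_, rfl, aparadox_const y⟩
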